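/- Let k ≥ 2 be an integer and z ∈ ℂ nonzero. Define t by t_0 = 1, t_k = z, and t_j = 0 for all other j ≥ 1, and assume 1 + C(n,k)·z ≠ 0 for all n. Then ζ_n^a = (1 + C(n,k)·|z|)/|1 + C(n,k)·z| − 1 and the series Σ_{n≥1} ζ_n^a converges (hence the associated ℂSG measure is of bounded variation). -/

import Mathlib

open MeasureTheory Filter Finset

attribute [local instance] Classical.propDecidable

noncomputable section

/-- A relation on ℕ representing a naturally labelled past-finite causal set:
a strict partial order `r` with `r i j → i < j`. -/
def CausalRel (r : ℕ → ℕ → Prop) : Prop :=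
  (∀ i, ¬ r i i) ∧ (∀ i j k, r i j → r j k → r i k) ∧ (∀ i j, r i j → i < j)

/-- Ω, the sample space of naturally labelled past-finite causal sets. -/
def Omega : Type := {r : ℕ → ℕ → Prop // CausalRel r}

/-- An `n`-node: a strict partial order on `Fin n` compatible with the labelling. -/
def IsNode {n : ℕ} (p : Fin n → Fin n → Prop) : Prop :=
  (∀ i, ¬ p i i) ∧ (∀ i j k, p i j → p j k → p i k) ∧
    (∀ i j : Fin n, p i j → (i : ℕ) < (j : ℕ))

/-- The cylinder set of an `n`-node. -/
def Cyl {n : ℕ} (p : Fin n → Fin n → Prop) : Set Omega :=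
  {r | ∀ i j : Fin n, r.1 i.1 j.1 ↔ p i j}

/-- The Boolean set algebra 𝔜 generated by the cylinder sets (and Ω itself) under
finite unions, intersections and complements. -/
inductive InAlg : Set Omega → Prop
  | basic {n : ℕ} (hn : 1 ≤ n) (p : Fin n → Fin n → Prop) (hp : IsNode p) : InAlg (Cyl p)
  | univ : InAlg Set.univ
  | compl (s : Set Omega) : InAlg s → InAlg sᶜ
  | union (s t : Set Omega) : InAlg s → InAlg t → InAlg (s ∪ t)

/-- Finite additivity of a complex set function on the algebra 𝔜. -/
def FinitelyAdditive (μ : Set Omega → ℂ) : Prop :=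
  ∀ s t : Set Omega, InAlg s → InAlg t → Disjoint s t → μ (s ∪ t) = μ s + μ t

/-- A finite partition of Ω into pairwise disjoint members of 𝔜. -/
def IsPartition (π : Finset (Set Omega)) : Prop :=
  (∀ s ∈ π, InAlg s) ∧ ((↑π : Set (Set Omega)).Pairwise Disjoint) ∧
    ⋃₀ (↑π : Set (Set Omega)) = Set.univ

/-- Bounded variation: the sums Σᵢ |μ(αᵢ)| over finite partitions of Ω into members
of 𝔜 are uniformly bounded. -/
def BoundedVariation (μ : Set Omega → ℂ) : Prop :=
  ∃ M : ℝ, ∀ π : Finset (Set Omega), IsPartition π → ∑ s ∈ π, ‖μ s‖ ≤ M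

/-- λ(a,b) = Σ_{k=b}^{a} C(a−b, k−b)·t_k. -/
def lam (t : ℕ → ℂ) (a b : ℕ) : ℂ :=
  ∑ k ∈ Finset.Icc b a, ((a - b).choose (k - b) : ℂ) * t k

/-- The maximal elements of a finite subset `I` with respect to the relation `c`. -/
def maxIn {n : ℕ} (c : Fin n → Fin n → Prop) (I : Finset (Fin n)) : Finset (Fin n) :=
  I.filter fun i => ∀ j ∈ I, ¬ c i j

/-- The past of the element `m` in the node `p`. -/
def pastOf {n : ℕ} (p : Fin n → Fin n → Prop) (m : Fin n) : Finset (Fin n) :=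
  Finset.univ.filter fun i => p i m

/-- The ℂSG amplitude of (the cylinder set of) an `n`-node:
∏_{m=1}^{n−1} λ(ϖ_m, μ_m)/λ(m,0). -/
def amp (t : ℕ → ℂ) {n : ℕ} (p : Fin n → Fin n → Prop) : ℂ :=
  ∏ m ∈ Finset.univ.filter (fun m : Fin n => 1 ≤ (m : ℕ)),
    lam t (pastOf p m).card (maxIn p (pastOf p m)).card / lam t (m : ℕ) 0

/-- μ is the ℂSG measure associated to the coupling constants t: it is finitely
additive on 𝔜 and takes the prescribed values on cylinder sets. -/
def IsCSG (t : ℕ → ℂ) (μ : Set Omega → ℂ) : Prop :=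
  FinitelyAdditive μ ∧
    ∀ (n : ℕ), 1 ≤ n → ∀ p : Fin n → Fin n → Prop, IsNode p → μ (Cyl p) = amp t p

/-- `I` is an order ideal (downward-closed set) of the relation `c`. -/
def isIdeal {n : ℕ} (c : Fin n → Fin n → Prop) (I : Finset (Fin n)) : Prop :=
  ∀ j ∈ I, ∀ i, c i j → i ∈ I

/-- Q(c) := Σ_{I an order ideal of c} |λ(|I|, m(I))|. -/
def Qval (t : ℕ → ℂ) {n : ℕ} (c : Fin n → Fin n → Prop) : ℝ :=
  ∑ I ∈ Finset.univ.filter (fun I : Finset (Fin n) => isIdeal c I),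
    ‖lam t I.card (maxIn c I).card‖

/-- ζ(c) := Q(c)/|λ(n,0)| − 1. -/
def zeta (t : ℕ → ℂ) {n : ℕ} (c : Fin n → Fin n → Prop) : ℝ :=
  Qval t c / ‖lam t n 0‖ - 1

/-- ζ_n^a := (Σ_{k=0}^{n} C(n,k)·|t_k|)/|λ(n,0)| − 1. -/
def zetaA (t : ℕ → ℂ) (n : ℕ) : ℝ :=
  (∑ k ∈ Finset.range (n + 1), (n.choose k : ℝ) * ‖t k‖) /
    ‖lam t n 0‖ - 1

/-- ζ_n^c := (|t_0| + Σ_{ϖ=1}^{n} |λ(ϖ,1)|)/|λ(n,0)| − 1. -/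
def zetaC (t : ℕ → ℂ) (n : ℕ) : ℝ :=
  (‖t 0‖ + ∑ w ∈ Finset.Icc 1 n, ‖lam t w 1‖) /
    ‖lam t n 0‖ - 1

/-- S_n := Σ_{p an n-node} |μ(Cyl(p))|. -/
def Svar (μ : Set Omega → ℂ) (n : ℕ) : ℝ :=
  ∑ p : {p : Fin n → Fin n → Prop // IsNode p}, ‖μ (Cyl p.1)‖

/-!
An `(n+1)`-node is an `n`-node `c` together with an order ideal `I` of `c`, the past of the new
element, and its amplitude is that of `c` times `λ(|I|, |max I|)/λ(n,0)`. Hence the total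
absolute amplitude of the `(n+1)`-nodes is at most that of the `n`-nodes times
`max_c Q(c)/|λ(n,0)|`. Bounding `|λ|` termwise, `Q(c) ≤ Σ_j C(n,j)|t_j|`: the pairs `(I, T)` with
`T` a set of `j - |max I|` non-maximal elements of `I` inject into the `j`-subsets by
`(I, T) ↦ max I ∪ T`, since `I` is the down-closure of that set. So the total variation at level
`N` is at most `∏_{1 ≤ m < N} (1 + ζ_m^a) ≤ exp (Σ_{1 ≤ m < N} ζ_m^a)`, and every set of the
algebra is a union of `N`-cylinders for all large `N`.

For the single coupling, `ζ_n^a` is explicit and `O(1/C(n,k)) = O(1/n²)` once `k ≥ 2`.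
-/

section Cylinders

variable {n m : ℕ}

def restrictTo (r : Omega) (n : ℕ) : Fin n → Fin n → Prop := fun i j => r.1 i j

lemma isNode_restrictTo (r : Omega) (n : ℕ) : IsNode (restrictTo r n) :=
  ⟨fun i => r.2.1 i, fun _ _ _ => r.2.2.1 _ _ _, fun _ _ => r.2.2.2 _ _⟩

lemma mem_Cyl_iff {p : Fin n → Fin n → Prop} {r : Omega} : r ∈ Cyl p ↔ restrictTo r n = p :=
  ⟨fun h => funext₂ fun i j => propext (h i j), fun h _ _ => h ▸ Iff.rfl⟩

lemma Cyl_nonempty {p : Fin n → Fin n → Prop} (hp : IsNode p) : (Cyl p).Nonempty := by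
  refine ⟨⟨fun a b => ∃ (ha : a < n) (hb : b < n), p ⟨a, ha⟩ ⟨b, hb⟩, ?_, ?_, ?_⟩, ?_⟩
  · rintro _ ⟨_, _, h⟩
    exact hp.1 _ h
  · rintro _ _ _ ⟨hi, _, h₁⟩ ⟨_, hl, h₂⟩
    exact ⟨hi, hl, hp.2.1 _ _ _ h₁ h₂⟩
  · rintro _ _ ⟨_, _, h⟩
    exact hp.2.2 _ _ h
  · exact fun i j => ⟨fun ⟨_, _, h⟩ => h, fun h => ⟨i.2, j.2, h⟩⟩

def DeterminedAt (n : ℕ) (s : Set Omega) : Prop :=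
  ∃ S : Set (Fin n → Fin n → Prop), s = (restrictTo · n) ⁻¹' S

lemma DeterminedAt.mono {s : Set Omega} (h : n ≤ m) (hs : DeterminedAt n s) :
    DeterminedAt m s := by
  obtain ⟨S, rfl⟩ := hs
  exact ⟨(fun q i j => q (Fin.castLE h i) (Fin.castLE h j)) ⁻¹' S, rfl⟩

lemma InAlg.eventually_determinedAt {s : Set Omega} (hs : InAlg s) :
    ∀ᶠ n in atTop, DeterminedAt n s := by
  induction hs with
  | @basic n _ p _ =>
    refine eventually_atTop.2 ⟨n, fun m hm => DeterminedAt.mono hm ⟨{p}, ?_⟩⟩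
    ext r
    exact mem_Cyl_iff
  | univ => exact Eventually.of_forall fun n => ⟨Set.univ, rfl⟩
  | compl s _ ih =>
    filter_upwards [ih] with n ⟨S, hS⟩
    exact ⟨Sᶜ, by rw [hS, Set.preimage_compl]⟩
  | union s u _ _ ihs ihu =>
    filter_upwards [ihs, ihu] with n ⟨S, hS⟩ ⟨U, hU⟩
    exact ⟨S ∪ U, by rw [hS, hU, Set.preimage_union]⟩

def nodesIn (n : ℕ) (s : Set Omega) : Finset {p : Fin n → Fin n → Prop // IsNode p} :=
  univ.filter fun p => Cyl p.1 ⊆ s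

lemma DeterminedAt.eq_biUnion_Cyl {s : Set Omega} (hs : DeterminedAt n s) :
    s = ⋃ p ∈ nodesIn n s, Cyl p.1 := by
  obtain ⟨S, rfl⟩ := hs
  refine subset_antisymm (fun r hr => ?_) (Set.iUnion₂_subset fun p hp => (mem_filter.1 hp).2)
  refine Set.mem_biUnion (x := ⟨restrictTo r n, isNode_restrictTo r n⟩) ?_ (mem_Cyl_iff.2 rfl)
  refine mem_filter.2 ⟨mem_univ _, fun r' hr' => ?_⟩
  rw [Set.mem_preimage, mem_Cyl_iff.1 hr']
  exact hr

end Cylinders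

section FinitelyAdditive

variable {μ : Set Omega → ℂ}

lemma InAlg.empty : InAlg (∅ : Set Omega) := by
  simpa using InAlg.compl _ InAlg.univ

lemma InAlg.biUnion {α : Type*} {F : Finset α} {f : α → Set Omega}
    (hf : ∀ i ∈ F, InAlg (f i)) : InAlg (⋃ i ∈ F, f i) := by
  induction F using Finset.induction_on with
  | empty => simpa using InAlg.empty
  | insert a F _ ih =>
    rw [Finset.set_biUnion_insert]
    exact .union _ _ (hf a (mem_insert_self a F)) (ih fun i hi => hf i (mem_insert_of_mem hi))

lemma FinitelyAdditive.map_empty (hμ : FinitelyAdditive μ) : μ ∅ = 0 := by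
  simpa using hμ ∅ ∅ InAlg.empty InAlg.empty disjoint_bot_left

lemma FinitelyAdditive.map_biUnion (hμ : FinitelyAdditive μ) {α : Type*} {F : Finset α}
    {f : α → Set Omega} (hf : ∀ i ∈ F, InAlg (f i)) (hd : (↑F : Set α).PairwiseDisjoint f) :
    μ (⋃ i ∈ F, f i) = ∑ i ∈ F, μ (f i) := by
  induction F using Finset.induction_on with
  | empty => simpa using hμ.map_empty
  | insert a F ha ih =>
    have hF : ∀ i ∈ F, InAlg (f i) := fun i hi => hf i (mem_insert_of_mem hi)
    rw [Finset.set_biUnion_insert, sum_insert ha,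
      hμ _ _ (hf a (mem_insert_self a F)) (InAlg.biUnion hF), ih hF (hd.subset (by simp))]
    refine Set.disjoint_iUnion₂_right.2 fun i hi => hd (by simp) (by simp [hi]) ?_
    rintro rfl
    exact ha hi

lemma FinitelyAdditive.norm_le_sum_nodesIn (hμ : FinitelyAdditive μ) {n : ℕ} (hn : 1 ≤ n)
    {s : Set Omega} (hs : DeterminedAt n s) :
    ‖μ s‖ ≤ ∑ p ∈ nodesIn n s, ‖μ (Cyl p.1)‖ := by
  conv_lhs => rw [hs.eq_biUnion_Cyl]
  rw [hμ.map_biUnion (fun p _ => .basic hn p.1 p.2)]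
  · exact norm_sum_le _ _
  · intro p _ q _ hpq
    refine Set.disjoint_left.2 fun r hp hq => hpq (Subtype.ext ?_)
    rw [← mem_Cyl_iff.1 hp, ← mem_Cyl_iff.1 hq]

lemma FinitelyAdditive.sum_norm_le_Svar (hμ : FinitelyAdditive μ) {π : Finset (Set Omega)}
    (hπ : IsPartition π) {N : ℕ} (hN : 1 ≤ N) (hdet : ∀ s ∈ π, DeterminedAt N s) :
    ∑ s ∈ π, ‖μ s‖ ≤ Svar μ N := by
  have hd : (↑π : Set (Set Omega)).PairwiseDisjoint (nodesIn N) := by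
    intro s hs u hu hsu
    refine Finset.disjoint_left.2 fun p hps hpu => ?_
    obtain ⟨r, hr⟩ := Cyl_nonempty p.2
    exact Set.disjoint_left.1 (hπ.2.1 hs hu hsu) ((mem_filter.1 hps).2 hr)
      ((mem_filter.1 hpu).2 hr)
  calc ∑ s ∈ π, ‖μ s‖ ≤ ∑ s ∈ π, ∑ p ∈ nodesIn N s, ‖μ (Cyl p.1)‖ :=
        sum_le_sum fun s hs => hμ.norm_le_sum_nodesIn hN (hdet s hs)
    _ = ∑ p ∈ π.biUnion (nodesIn N), ‖μ (Cyl p.1)‖ := (sum_biUnion hd).symm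
    _ ≤ Svar μ N := sum_le_univ_sum_of_nonneg fun p => norm_nonneg (μ (Cyl p.1))

lemma FinitelyAdditive.boundedVariation (hμ : FinitelyAdditive μ) {B : ℝ}
    (hB : ∀ N, 1 ≤ N → Svar μ N ≤ B) : BoundedVariation μ := by
  refine ⟨B, fun π hπ => ?_⟩
  obtain ⟨N, hN, hdet⟩ := ((eventually_ge_atTop 1).and
    ((eventually_all_finset π).2 fun s hs => (hπ.1 s hs).eventually_determinedAt)).exists
  exact (hμ.sum_norm_le_Svar hπ hN hdet).trans (hB N hN)

end FinitelyAdditive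

section Extension

variable {n : ℕ}

def restrictLast (q : Fin (n + 1) → Fin (n + 1) → Prop) : Fin n → Fin n → Prop :=
  fun i j => q i.castSucc j.castSucc

def pastOfLast (q : Fin (n + 1) → Fin (n + 1) → Prop) : Finset (Fin n) :=
  univ.filter fun i => q i.castSucc (Fin.last n)

/-- Adjoin a new element, labelled `n`, whose past is `I`. -/
def extendBy (c : Fin n → Fin n → Prop) (I : Finset (Fin n)) :
    Fin (n + 1) → Fin (n + 1) → Prop :=
  Fin.lastCases (motive := fun _ => Fin (n + 1) → Prop) (fun _ => False)
    fun i => Fin.lastCases (motive := fun _ => Prop) (i ∈ I) fun j => c i j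

lemma isNode_restrictLast {q : Fin (n + 1) → Fin (n + 1) → Prop} (hq : IsNode q) :
    IsNode (restrictLast q) :=
  ⟨fun _ => hq.1 _, fun _ _ _ => hq.2.1 _ _ _, fun _ _ h => by simpa using hq.2.2 _ _ h⟩

lemma isIdeal_pastOfLast {q : Fin (n + 1) → Fin (n + 1) → Prop} (hq : IsNode q) :
    isIdeal (restrictLast q) (pastOfLast q) := by
  intro j hj i hij
  simp only [pastOfLast, mem_filter, mem_univ, true_and] at hj ⊢
  exact hq.2.1 _ _ _ hij hj

lemma isNode_extendBy {c : Fin n → Fin n → Prop} {I : Finset (Fin n)} (hc : IsNode c)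
    (hI : isIdeal c I) : IsNode (extendBy c I) := by
  refine ⟨fun i => ?_, fun i j l => ?_, fun i j => ?_⟩
  · cases i using Fin.lastCases <;> simp [extendBy, hc.1]
  · cases i using Fin.lastCases <;> cases j using Fin.lastCases <;>
      cases l using Fin.lastCases <;> simp only [extendBy, Fin.lastCases_last,
        Fin.lastCases_castSucc, IsEmpty.forall_iff, implies_true]
    · exact fun hij hj => hI _ hj _ hij
    · exact hc.2.1 _ _ _
  · cases i using Fin.lastCases <;> cases j using Fin.lastCases <;>
      simp [extendBy]
    exact hc.2.2 _ _

lemma restrictLast_extendBy (c : Fin n → Fin n → Prop) (I : Finset (Fin n)) :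
    restrictLast (extendBy c I) = c := by
  funext i j
  simp [restrictLast, extendBy]

lemma pastOfLast_extendBy (c : Fin n → Fin n → Prop) (I : Finset (Fin n)) :
    pastOfLast (extendBy c I) = I := by
  ext i
  simp [pastOfLast, extendBy]

lemma extendBy_restrictLast {q : Fin (n + 1) → Fin (n + 1) → Prop} (hq : IsNode q) :
    extendBy (restrictLast q) (pastOfLast q) = q := by
  funext i j
  refine propext ?_
  cases i using Fin.lastCases with
  | last =>
    cases j using Fin.lastCases with
    | last => simpa [extendBy] using hq.1 (Fin.last n)
    | cast j => simpa [extendBy] using mt (hq.2.2 (Fin.last n) j.castSucc) (by simp [j.2.le])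
  | cast i => cases j using Fin.lastCases <;> simp [extendBy, restrictLast, pastOfLast]

def nodeSuccEquiv (n : ℕ) :
    (Σ c : {c : Fin n → Fin n → Prop // IsNode c}, {I : Finset (Fin n) // isIdeal c.1 I}) ≃
      {q : Fin (n + 1) → Fin (n + 1) → Prop // IsNode q} where
  toFun x := ⟨extendBy x.1.1 x.2.1, isNode_extendBy x.1.2 x.2.2⟩
  invFun q := ⟨⟨restrictLast q.1, isNode_restrictLast q.2⟩,
    ⟨pastOfLast q.1, isIdeal_pastOfLast q.2⟩⟩
  left_inv _ := Sigma.subtype_ext (Subtype.ext (restrictLast_extendBy _ _))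
    (pastOfLast_extendBy _ _)
  right_inv q := Subtype.ext (extendBy_restrictLast q.2)

lemma pastOf_extendBy_castSucc (c : Fin n → Fin n → Prop) (I : Finset (Fin n)) (m : Fin n) :
    pastOf (extendBy c I) m.castSucc = (pastOf c m).map Fin.castSuccEmb := by
  ext i
  simp only [pastOf, mem_filter, mem_univ, true_and, Finset.mem_map]
  cases i using Fin.lastCases <;> simp [extendBy]

lemma pastOf_extendBy_last (c : Fin n → Fin n → Prop) (I : Finset (Fin n)) :
    pastOf (extendBy c I) (Fin.last n) = I.map Fin.castSuccEmb := by
  ext i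
  simp only [pastOf, mem_filter, mem_univ, true_and, Finset.mem_map]
  cases i using Fin.lastCases <;> simp [extendBy]

lemma card_maxIn_extendBy_map (c : Fin n → Fin n → Prop) (I S : Finset (Fin n)) :
    #(maxIn (extendBy c I) (S.map Fin.castSuccEmb)) = #(maxIn c S) := by
  rw [maxIn, filter_map, card_map]
  congr 1
  refine filter_congr fun i _ => ?_
  simp [extendBy]

lemma amp_extendBy (t : ℕ → ℂ) (hn : 1 ≤ n) (c : Fin n → Fin n → Prop) (I : Finset (Fin n)) :
    amp t (extendBy c I) = amp t c * (lam t #I #(maxIn c I) / lam t n 0) := by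
  rw [amp, amp, prod_filter, prod_filter, Fin.prod_univ_castSucc]
  simp only [Fin.val_castSucc, Fin.val_last, if_pos hn, pastOf_extendBy_castSucc,
    pastOf_extendBy_last, card_maxIn_extendBy_map, card_map]

end Extension

section IdealCount

variable {n : ℕ} {c : Fin n → Fin n → Prop}

lemma maxIn_subset (c : Fin n → Fin n → Prop) (I : Finset (Fin n)) : maxIn c I ⊆ I :=
  filter_subset _ _

lemma exists_mem_maxIn_of_mem (hc : IsNode c) {I : Finset (Fin n)} {i : Fin n} (hi : i ∈ I) :
    ∃ j ∈ maxIn c I, i = j ∨ c i j := by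
  -- the element above `i` with the largest label is maximal
  obtain ⟨j, hj, hjmax⟩ := exists_max_image (I.filter fun j => i = j ∨ c i j)
    (fun j => (j : ℕ)) ⟨i, mem_filter.2 ⟨hi, Or.inl rfl⟩⟩
  obtain ⟨hjI, hij⟩ := mem_filter.1 hj
  refine ⟨j, mem_filter.2 ⟨hjI, fun l hl hjl => ?_⟩, hij⟩
  have hil : i = l ∨ c i l := Or.inr (hij.elim (· ▸ hjl) (hc.2.1 _ _ _ · hjl))
  exact (hjmax l (mem_filter.2 ⟨hl, hil⟩)).not_gt (hc.2.2 _ _ hjl)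

def downClosure (c : Fin n → Fin n → Prop) (S : Finset (Fin n)) : Finset (Fin n) :=
  univ.filter fun i => ∃ j ∈ S, i = j ∨ c i j

lemma downClosure_maxIn_union (hc : IsNode c) {I T : Finset (Fin n)} (hI : isIdeal c I)
    (hT : T ⊆ I) : downClosure c (maxIn c I ∪ T) = I := by
  ext i
  simp only [downClosure, mem_filter, mem_univ, true_and]
  constructor
  · rintro ⟨j, hj, rfl | hij⟩
    · exact (mem_union.1 hj).elim (maxIn_subset c I ·) (hT ·)
    · exact hI j ((mem_union.1 hj).elim (maxIn_subset c I ·) (hT ·)) i hij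
  · intro hi
    obtain ⟨j, hj, hij⟩ := exists_mem_maxIn_of_mem hc hi
    exact ⟨j, mem_union_left _ hj, hij⟩

lemma sum_choose_le_choose (hc : IsNode c) (j : ℕ) :
    ∑ I ∈ (univ.filter (isIdeal c)).filter (fun I => #(maxIn c I) ≤ j),
      (#I - #(maxIn c I)).choose (j - #(maxIn c I)) ≤ n.choose j := by
  set G := (univ.filter (isIdeal c)).filter fun I => #(maxIn c I) ≤ j
  set pairs := G.sigma fun I => powersetCard (j - #(maxIn c I)) (I \ maxIn c I)
  have hG : ∀ I ∈ G, isIdeal c I ∧ #(maxIn c I) ≤ j := fun I hI => by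
    simpa [G] using hI
  have hpair : ∀ x ∈ pairs, x.2 ⊆ x.1 \ maxIn c x.1 ∧ #x.2 = j - #(maxIn c x.1) :=
    fun x hx => mem_powersetCard.1 (mem_sigma.1 hx).2
  have hdisj : ∀ x ∈ pairs, Disjoint (maxIn c x.1) x.2 := fun x hx =>
    disjoint_left.2 fun _ ha haT => (mem_sdiff.1 ((hpair x hx).1 haT)).2 ha
  have hsub : ∀ x ∈ pairs, x.2 ⊆ x.1 := fun x hx => (hpair x hx).1.trans sdiff_subset
  calc ∑ I ∈ G, (#I - #(maxIn c I)).choose (j - #(maxIn c I)) = #pairs := by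
        rw [card_sigma]
        refine sum_congr rfl fun I _ => ?_
        rw [card_powersetCard, card_sdiff_of_subset (maxIn_subset c I)]
    _ ≤ #(powersetCard j (univ : Finset (Fin n))) := by
        refine card_le_card_of_injOn (fun x => maxIn c x.1 ∪ x.2) (fun x hx => ?_) ?_
        · rw [mem_coe, mem_powersetCard, card_union_of_disjoint (hdisj x hx), (hpair x hx).2]
          have := (hG x.1 (mem_sigma.1 hx).1).2
          exact ⟨subset_univ _, by omega⟩
        · rintro ⟨I, T⟩ hx ⟨I', T'⟩ hy (hxy : maxIn c I ∪ T = maxIn c I' ∪ T')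
          have hII' : I = I' := by
            rw [← downClosure_maxIn_union hc (hG I (mem_sigma.1 hx).1).1 (hsub _ hx),
              ← downClosure_maxIn_union hc (hG I' (mem_sigma.1 hy).1).1 (hsub _ hy), hxy]
          subst hII'
          have hTT' : T = T' := by
            have h := congrArg (· \ maxIn c I) hxy
            simpa only [union_sdiff_cancel_left (hdisj _ hx),
              union_sdiff_cancel_left (hdisj _ hy)] using h
          rw [hTT']
    _ = n.choose j := by rw [card_powersetCard, card_univ, Fintype.card_fin]

end IdealCount

lemma norm_lam_le_sum_range (t : ℕ → ℂ) {a b n : ℕ} (han : a ≤ n) :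
    ‖lam t a b‖ ≤
      ∑ j ∈ range (n + 1), if b ≤ j then ((a - b).choose (j - b) : ℝ) * ‖t j‖ else 0 := by
  rw [← sum_filter]
  calc ‖lam t a b‖ ≤ ∑ j ∈ Icc b a, ((a - b).choose (j - b) : ℝ) * ‖t j‖ := by
        refine (norm_sum_le _ _).trans_eq (sum_congr rfl fun j _ => ?_)
        rw [norm_mul, Complex.norm_natCast]
    _ ≤ _ := by
        refine sum_le_sum_of_subset_of_nonneg (fun j hj => ?_) fun _ _ _ => by positivity
        simp only [mem_Icc] at hj
        simp only [mem_filter, mem_range]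
        omega

section Variation

variable {t : ℕ → ℂ} {n : ℕ}

lemma Qval_le_sum_choose {c : Fin n → Fin n → Prop} (hc : IsNode c) :
    Qval t c ≤ ∑ j ∈ range (n + 1), (n.choose j : ℝ) * ‖t j‖ := by
  calc Qval t c ≤ ∑ I ∈ univ.filter (isIdeal c), ∑ j ∈ range (n + 1),
        if #(maxIn c I) ≤ j then ((#I - #(maxIn c I)).choose (j - #(maxIn c I)) : ℝ) * ‖t j‖
        else 0 :=
        sum_le_sum fun I _ => norm_lam_le_sum_range t (card_le_univ I |>.trans_eq (by simp))
    _ = ∑ j ∈ range (n + 1), ((∑ I ∈ (univ.filter (isIdeal c)).filter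
          (fun I => #(maxIn c I) ≤ j),
          (#I - #(maxIn c I)).choose (j - #(maxIn c I)) : ℕ) : ℝ) * ‖t j‖ := by
        rw [sum_comm]
        refine sum_congr rfl fun j _ => ?_
        rw [← sum_filter, Nat.cast_sum, sum_mul]
    _ ≤ _ := sum_le_sum fun j _ => mul_le_mul_of_nonneg_right
        (by exact_mod_cast sum_choose_le_choose hc j) (norm_nonneg _)

lemma one_add_zetaA_nonneg (t : ℕ → ℂ) (n : ℕ) : 0 ≤ 1 + zetaA t n := by
  rw [zetaA, add_sub_cancel]
  positivity

def ampMass (t : ℕ → ℂ) (n : ℕ) : ℝ :=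
  ∑ p : {p : Fin n → Fin n → Prop // IsNode p}, ‖amp t p.1‖

lemma IsCSG.Svar_eq_ampMass {μ : Set Omega → ℂ} (hμ : IsCSG t μ) (hn : 1 ≤ n) :
    Svar μ n = ampMass t n :=
  sum_congr rfl fun p _ => by rw [hμ.2 n hn p.1 p.2]

lemma ampMass_one (t : ℕ → ℂ) : ampMass t 1 = 1 := by
  have hempty : IsNode fun _ _ : Fin 1 => False :=
    ⟨fun _ h => h, fun _ _ _ h _ => h, fun _ _ h => h.elim⟩
  have : Subsingleton {p : Fin 1 → Fin 1 → Prop // IsNode p} :=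
    ⟨fun p q => Subtype.ext <| funext₂ fun i j => by
      rw [eq_false fun h => (p.2.2.2 i j h).ne (by omega),
        eq_false fun h => (q.2.2.2 i j h).ne (by omega)]⟩
  rw [ampMass, Fintype.sum_subsingleton _ ⟨_, hempty⟩, amp, filter_false_of_mem (by omega),
    prod_empty, norm_one]

lemma ampMass_succ (hn : 1 ≤ n) :
    ampMass t (n + 1) =
      ∑ c : {c : Fin n → Fin n → Prop // IsNode c}, ‖amp t c.1‖ * (Qval t c.1 / ‖lam t n 0‖) := by
  rw [ampMass, ← (nodeSuccEquiv n).sum_comp, Fintype.sum_sigma]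
  refine sum_congr rfl fun c _ => ?_
  rw [Qval, sum_div, mul_sum,
    sum_subtype (univ.filter (isIdeal c.1)) (p := fun I => isIdeal c.1 I) (fun I => by simp)]
  refine sum_congr rfl fun I _ => ?_
  simp only [nodeSuccEquiv, Equiv.coe_fn_mk]
  rw [amp_extendBy t hn, norm_mul, norm_div]

lemma ampMass_succ_le (hn : 1 ≤ n) : ampMass t (n + 1) ≤ ampMass t n * (1 + zetaA t n) := by
  rw [ampMass_succ hn, ampMass, sum_mul]
  refine sum_le_sum fun c _ => mul_le_mul_of_nonneg_left ?_ (norm_nonneg _)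
  rw [zetaA, add_sub_cancel]
  exact div_le_div_of_nonneg_right (Qval_le_sum_choose c.2) (norm_nonneg _)

lemma ampMass_le_exp {N : ℕ} (hN : 1 ≤ N) : ampMass t N ≤ Real.exp (∑ m ∈ Ico 1 N, zetaA t m) := by
  induction N, hN using Nat.le_induction with
  | base => simp [ampMass_one]
  | succ N hN ih =>
    rw [sum_Ico_succ_top hN, Real.exp_add]
    calc ampMass t (N + 1) ≤ ampMass t N * (1 + zetaA t N) := ampMass_succ_le hN
      _ ≤ _ := mul_le_mul ih (by linarith [Real.add_one_le_exp (zetaA t N)])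
          (one_add_zetaA_nonneg t N) (Real.exp_pos _).le

theorem IsCSG.boundedVariation {μ : Set Omega → ℂ} (hμ : IsCSG t μ)
    (hζ : BddAbove (Set.range fun N => ∑ m ∈ Ico 1 N, zetaA t m)) : BoundedVariation μ := by
  obtain ⟨B, hB⟩ := hζ
  refine hμ.1.boundedVariation (B := Real.exp B) fun N hN => ?_
  rw [hμ.Svar_eq_ampMass hN]
  exact (ampMass_le_exp hN).trans (Real.exp_le_exp.2 (hB ⟨N, rfl⟩))

end Variation

lemma sum_range_choose_mul_of_support {R : Type*} [Semiring R] {k : ℕ} (hk : k ≠ 0)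
    {f : ℕ → R} (hf : ∀ j, 1 ≤ j → j ≠ k → f j = 0) (n : ℕ) :
    ∑ j ∈ range (n + 1), (n.choose j : R) * f j = f 0 + (n.choose k : R) * f k := by
  rw [sum_eq_add 0 k hk.symm]
  · simp
  · intro j _ hj
    rw [hf j (Nat.one_le_iff_ne_zero.2 hj.1) hj.2, mul_zero]
  · simp
  · intro hkn
    rw [Nat.choose_eq_zero_of_lt (by simpa using hkn), Nat.cast_zero, zero_mul]

lemma lam_zero_eq_sum_range (t : ℕ → ℂ) (n : ℕ) :
    lam t n 0 = ∑ j ∈ range (n + 1), (n.choose j : ℂ) * t j := by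
  simp [lam, Nat.range_succ_eq_Icc_zero]

lemma abs_one_add_norm_div_sub_one_le {E : Type*} [NormedRing E] [NormOneClass E] {a : E}
    (ha : 2 ≤ ‖a‖) : |(1 + ‖a‖) / ‖1 + a‖ - 1| ≤ 4 / ‖a‖ := by
  have hlow : ‖a‖ - 1 ≤ ‖1 + a‖ := by
    have := norm_sub_le (1 + a) 1
    rw [add_sub_cancel_left, norm_one] at this
    linarith
  have hup : ‖1 + a‖ ≤ 1 + ‖a‖ := by simpa using norm_add_le (1 : E) a
  have hpos : 0 < ‖1 + a‖ := by linarith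
  rw [abs_of_nonneg (by rw [sub_nonneg, one_le_div hpos]; exact hup), sub_le_iff_le_add,
    div_le_iff₀ hpos]
  have : 4 / ‖a‖ * (‖a‖ - 1) ≥ 2 := by
    rw [div_mul_eq_mul_div, ge_iff_le, le_div_iff₀ (by linarith)]; linarith
  nlinarith

lemma summable_inv_choose {k : ℕ} (hk : 2 ≤ k) : Summable fun n : ℕ => ((n.choose k : ℝ))⁻¹ := by
  rw [← summable_nat_add_iff k]
  have hpow : Summable fun m : ℕ => (k.factorial : ℝ) * (((m + 1 : ℕ) : ℝ) ^ k)⁻¹ :=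
    ((summable_nat_add_iff 1).2 (Real.summable_nat_pow_inv.2 (by omega))).mul_left _
  refine hpow.of_nonneg_of_le (fun _ => by positivity) fun m => ?_
  have hlow := Nat.pow_le_choose (α := ℝ) k (m + k)
  rw [show m + k + 1 - k = m + 1 by omega] at hlow
  calc ((m + k).choose k : ℝ)⁻¹ ≤ ((((m + 1 : ℕ) : ℝ) ^ k) / k.factorial)⁻¹ :=
        inv_anti₀ (by positivity) hlow
    _ = _ := by rw [inv_div, div_eq_mul_inv]

lemma Summable.tendsto_sum_Ico_one {f : ℕ → ℝ} (hf : Summable f) :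
    Tendsto (fun N => ∑ n ∈ Ico 1 N, f n) atTop (nhds (∑' n, f n - f 0)) := by
  refine (hf.hasSum.tendsto_sum_nat.sub_const (f 0)).congr' ?_
  filter_upwards [eventually_ge_atTop 1] with N hN
  rw [sum_Ico_eq_sub _ hN, sum_range_one]

section SingleCoupling

variable {k : ℕ} {z : ℂ} {t : ℕ → ℂ}

lemma zetaA_eq_of_single (hk : k ≠ 0) (ht0 : t 0 = 1) (htk : t k = z)
    (ht : ∀ j : ℕ, 1 ≤ j → j ≠ k → t j = 0) (n : ℕ) :
    zetaA t n = (1 + (n.choose k : ℝ) * ‖z‖) / ‖1 + (n.choose k : ℂ) * z‖ - 1 := by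
  have hnorm : ∀ j, 1 ≤ j → j ≠ k → ‖t j‖ = 0 := fun j h1 h2 => by rw [ht j h1 h2, norm_zero]
  rw [zetaA, sum_range_choose_mul_of_support hk hnorm, lam_zero_eq_sum_range,
    sum_range_choose_mul_of_support hk ht, ht0, htk, norm_one]

lemma summable_zetaA_of_single (hk : 2 ≤ k) (hz : z ≠ 0)
    (ht0 : t 0 = 1) (htk : t k = z) (ht : ∀ j : ℕ, 1 ≤ j → j ≠ k → t j = 0) :
    Summable (zetaA t) := by
  have hz' : 0 < ‖z‖ := norm_pos_iff.2 hz
  have hinv := summable_inv_choose hk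
  refine Summable.of_norm_bounded_eventually_nat (hinv.mul_left (4 / ‖z‖)) ?_
  filter_upwards [hinv.tendsto_atTop_zero.eventually (ge_mem_nhds (half_pos hz')),
    eventually_ge_atTop k] with n hsmall hkn
  have hC : (0 : ℝ) < n.choose k := by exact_mod_cast Nat.choose_pos hkn
  have hnorm : ‖(n.choose k : ℂ) * z‖ = (n.choose k : ℝ) * ‖z‖ := by
    rw [norm_mul, Complex.norm_natCast]
  have hbig : 2 ≤ ‖(n.choose k : ℂ) * z‖ := by
    rw [hnorm, ← div_le_iff₀' hC, div_eq_mul_inv, ← le_div_iff₀' two_pos]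
    exact hsmall
  have := abs_one_add_norm_div_sub_one_le hbig
  rw [hnorm] at this
  rw [Real.norm_eq_abs, zetaA_eq_of_single (by omega) ht0 htk ht]
  calc _ ≤ 4 / ((n.choose k : ℝ) * ‖z‖) := this
    _ = 4 / ‖z‖ * (n.choose k : ℝ)⁻¹ := by field_simp

end SingleCoupling

theorem statement_11_general (k : ℕ) (hk : 2 ≤ k) (z : ℂ) (hz : z ≠ 0)
    (t : ℕ → ℂ) (ht0 : t 0 = 1) (htk : t k = z)
    (ht : ∀ j : ℕ, 1 ≤ j → j ≠ k → t j = 0) :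
    (∀ n : ℕ, zetaA t n =
        (1 + (n.choose k : ℝ) * ‖z‖) /
          ‖1 + (n.choose k : ℂ) * z‖ - 1) ∧
    (∃ L : ℝ, Filter.Tendsto (fun N => ∑ n ∈ Finset.Ico 1 N, zetaA t n)
        Filter.atTop (nhds L)) ∧
    (∀ μ : Set Omega → ℂ, IsCSG t μ → BoundedVariation μ) := by
  have hlim := (summable_zetaA_of_single hk hz ht0 htk ht).tendsto_sum_Ico_one
  exact ⟨zetaA_eq_of_single (by omega) ht0 htk ht, ⟨_, hlim⟩,
    fun μ hμ => hμ.boundedVariation hlim.bddAbove_range⟩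

/-- single coupling t_k = z with k ≥ 2: ζ_n^a has the stated closed form
and Σ_{n≥1} ζ_n^a converges, hence the associated ℂSG measure is of bounded variation. -/
theorem statement_11 (k : ℕ) (hk : 2 ≤ k) (z : ℂ) (hz : z ≠ 0)
    (t : ℕ → ℂ) (ht0 : t 0 = 1) (htk : t k = z)
    (ht : ∀ j : ℕ, 1 ≤ j → j ≠ k → t j = 0)
    (hne : ∀ n : ℕ, 1 + (n.choose k : ℂ) * z ≠ 0) :
    (∀ n : ℕ, zetaA t n =
        (1 + (n.choose k : ℝ) * ‖z‖) /
          ‖1 + (n.choose k : ℂ) * z‖ - 1) ∧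
    (∃ L : ℝ, Filter.Tendsto (fun N => ∑ n ∈ Finset.Ico 1 N, zetaA t n)
        Filter.atTop (nhds L)) ∧
    (∀ μ : Set Omega → ℂ, IsCSG t μ → BoundedVariation μ) :=
  statement_11_general k hk z hz t ht0 htk ht

end
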